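/- Assume nμ < 1 and M ≥ γ. Let R : [0,T] → ℝ be the nonnegative C¹ solution of R'(t) = γ(N − n·e^{−μR(t)} − R(t)), R(0) = 0, and let (R_k) be the relaxation scheme. Then with c = √((M + γnμ − γ)/(M − γnμ + γ)) ∈ [0,1), one has for every k ≥ 1: max_{0 ≤ t ≤ T} |R_k(t) − R(t)| ≤ c^k · max_{0 ≤ t ≤ T} |R(t)|. -/

import Mathlib

/-!
The error `e_k = R_k - R` solves `e_{k+1}' + M e_{k+1} = F(R_k) - F(R)` with
`F r = γN - g r + M r`, and on `[0, ∞)` the map `F` is Lipschitz with constant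
`L = M - γ + γnμ`, because `r ↦ e^{-μr}` is `μ`-Lipschitz there. The integrating factor
`e^{Mt}` turns this into `sup |e_{k+1}| ≤ (L / M) sup |e_k|`, so `sup |e_k| ≤ (L / M)^k sup |R|`.
Writing `u = γ - γnμ > 0`, we have `L = M - u` and `c = √((M - u) / (M + u))`, and
`(M - u) / M ≤ c` is equivalent to `(M - u)(M + u) ≤ M²`.
-/

open Real Set

theorem abs_exp_neg_mul_sub_exp_neg_mul_le {μ x y : ℝ} (hμ : 0 ≤ μ) (hx : 0 ≤ x) (hy : 0 ≤ y) :
    |exp (-(μ * x)) - exp (-(μ * y))| ≤ μ * |x - y| := by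
  wlog hxy : x ≤ y generalizing x y
  · rw [abs_sub_comm, abs_sub_comm x]
    exact this hy hx (le_of_not_ge hxy)
  have hexp_le : exp (-(μ * y)) ≤ exp (-(μ * x)) := exp_le_exp.mpr (by nlinarith)
  have hsplit : exp (-(μ * y)) = exp (-(μ * x)) * exp (-(μ * (y - x))) := by
    rw [← exp_add]; ring_nf
  have hlin := add_one_le_exp (-(μ * (y - x)))
  have hx_le_one : exp (-(μ * x)) ≤ 1 := exp_le_one_iff.mpr (by nlinarith)
  rw [abs_of_nonneg (sub_nonneg.mpr hexp_le), abs_of_nonpos (by linarith)]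
  nlinarith [exp_pos (-(μ * x))]

theorem le_div_of_hasDerivAt_eq_neg_mul_add {M C T : ℝ} {d h : ℝ → ℝ} (hM : 0 < M) (hC : 0 ≤ C)
    (hd0 : d 0 = 0) (hd : ∀ t ∈ Icc 0 T, HasDerivAt d (-M * d t + h t) t)
    (hh : ∀ t ∈ Icc 0 T, h t ≤ C) : ∀ t ∈ Icc 0 T, d t ≤ C / M := by
  set G : ℝ → ℝ := fun t => exp (M * t) * (d t - C / M)
  have hG : ∀ t ∈ Icc 0 T, HasDerivAt G (exp (M * t) * (h t - C)) t := by
    intro t ht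
    have hexp : HasDerivAt (fun t => exp (M * t)) (exp (M * t) * M) t := by
      simpa using ((hasDerivAt_id t).const_mul M).exp
    refine (hexp.mul ((hd t ht).sub_const (C / M))).congr_deriv ?_
    field_simp
    ring
  have hanti : AntitoneOn G (Icc 0 T) := by
    refine antitoneOn_of_deriv_nonpos (convex_Icc 0 T)
      (fun t ht => (hG t ht).continuousAt.continuousWithinAt)
      (fun t ht => (hG t (interior_subset ht)).differentiableAt.differentiableWithinAt)
      (fun t ht => ?_)
    rw [(hG t (interior_subset ht)).deriv]
    exact mul_nonpos_of_nonneg_of_nonpos (exp_pos _).le (sub_nonpos.mpr (hh t (interior_subset ht)))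
  intro t ht
  have hG0 : G 0 = -(C / M) := by simp [G, hd0]
  have hGt : G t ≤ 0 :=
    (hanti ⟨le_rfl, ht.1.trans ht.2⟩ ht ht.1).trans_eq hG0 |>.trans (by
      simpa using div_nonneg hC hM.le)
  exact sub_nonpos.mp (nonpos_of_mul_nonpos_right hGt (exp_pos _))

theorem abs_le_div_of_hasDerivAt_eq_neg_mul_add {M C T : ℝ} {d h : ℝ → ℝ} (hM : 0 < M)
    (hd0 : d 0 = 0) (hd : ∀ t ∈ Icc 0 T, HasDerivAt d (-M * d t + h t) t)
    (hh : ∀ t ∈ Icc 0 T, |h t| ≤ C) : ∀ t ∈ Icc 0 T, |d t| ≤ C / M := by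
  intro t ht
  have hC : 0 ≤ C := (abs_nonneg _).trans (hh t ht)
  have hupper := le_div_of_hasDerivAt_eq_neg_mul_add hM hC hd0 hd
    (fun s hs => (abs_le.mp (hh s hs)).2) t ht
  have hlower := le_div_of_hasDerivAt_eq_neg_mul_add (d := fun s => -d s) (h := fun s => -h s)
    hM hC (by simp [hd0]) (fun s hs => ((hd s hs).neg).congr_deriv (by ring))
    (fun s hs => neg_le.mp (abs_le.mp (hh s hs)).1) t ht
  exact abs_le.mpr ⟨by linarith, hupper⟩

theorem abs_sub_le_of_hasDerivAt_relaxation {F : ℝ → ℝ} {M L T E : ℝ} (hM : 0 < M)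
    (hL : 0 ≤ L) (hF : ∀ x y, 0 ≤ x → 0 ≤ y → |F x - F y| ≤ L * |x - y|) {u v w : ℝ → ℝ}
    (hvw0 : v 0 = w 0) (hv : ∀ t ∈ Icc 0 T, HasDerivAt v (F (u t) - M * v t) t)
    (hw : ∀ t ∈ Icc 0 T, HasDerivAt w (F (w t) - M * w t) t)
    (hu : ∀ t ∈ Icc 0 T, 0 ≤ u t) (hw_nonneg : ∀ t ∈ Icc 0 T, 0 ≤ w t)
    (huw : ∀ t ∈ Icc 0 T, |u t - w t| ≤ E) :
    ∀ t ∈ Icc 0 T, |v t - w t| ≤ L / M * E := by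
  have hbound := abs_le_div_of_hasDerivAt_eq_neg_mul_add (d := fun t => v t - w t)
    (h := fun t => F (u t) - F (w t)) (C := L * E) hM (sub_eq_zero.mpr hvw0)
    (fun t ht => ((hv t ht).sub (hw t ht)).congr_deriv (by ring))
    (fun t ht => (hF _ _ (hu t ht) (hw_nonneg t ht)).trans
      (mul_le_mul_of_nonneg_left (huw t ht) hL))
  intro t ht
  rw [div_mul_eq_mul_div]
  exact hbound t ht

theorem abs_relaxation_map_sub_le {γ n μ M x y : ℝ} (hγ : 0 ≤ γ) (hn : 0 ≤ n) (hμ : 0 ≤ μ)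
    (hM : γ ≤ M) (hx : 0 ≤ x) (hy : 0 ≤ y) :
    |(M * x - (γ * n * exp (-(μ * x)) + γ * x)) - (M * y - (γ * n * exp (-(μ * y)) + γ * y))| ≤
      (M - γ + γ * n * μ) * |x - y| := by
  have hγn : 0 ≤ γ * n := mul_nonneg hγ hn
  calc _ = |(M - γ) * (x - y) + γ * n * (exp (-(μ * y)) - exp (-(μ * x)))| := by ring_nf
    _ ≤ (M - γ) * |x - y| + γ * n * (μ * |x - y|) := by
        refine (abs_add_le _ _).trans (add_le_add ?_ ?_)
        · rw [abs_mul, abs_of_nonneg (sub_nonneg.mpr hM)]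
        · rw [abs_mul, abs_of_nonneg hγn]
          rw [abs_sub_comm x]
          exact mul_le_mul_of_nonneg_left (abs_exp_neg_mul_sub_exp_neg_mul_le hμ hy hx) hγn
    _ = (M - γ + γ * n * μ) * |x - y| := by ring

theorem sub_div_self_le_sqrt_sub_div_add {M u : ℝ} (hu : 0 < u) (huM : u ≤ M) :
    (M - u) / M ≤ √((M - u) / (M + u)) := by
  have hM : 0 < M := hu.trans_le huM
  have hMu : 0 ≤ M - u := sub_nonneg.mpr huM
  rw [le_sqrt (div_nonneg hMu hM.le) (div_nonneg hMu (by linarith)), div_pow,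
    div_le_div_iff₀ (by positivity) (by linarith)]
  nlinarith [mul_nonneg hMu (sq_nonneg u)]

theorem sqrt_sub_div_add_lt_one {M u : ℝ} (hu : 0 < u) (hM : 0 < M) :
    √((M - u) / (M + u)) < 1 := by
  rw [sqrt_lt' one_pos, one_pow, div_lt_one (by linarith)]
  linarith

theorem relaxation_geometric_convergence_general
    (β γ n N μ M T c : ℝ) (hβ : 0 < β) (hγ : 0 < γ) (hn : 1 < n)
    (hμ : μ = β / γ) (hsmall : n * μ < 1) (hM : γ ≤ M)
    (hc : c = Real.sqrt ((M + γ * n * μ - γ) / (M - γ * n * μ + γ)))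
    (g : ℝ → ℝ) (hg : ∀ r, g r = γ * n * Real.exp (-(μ * r)) + γ * r)
    (R : ℝ → ℝ)
    (hRode : ∀ t ∈ Set.Icc (0 : ℝ) T,
      HasDerivAt R (γ * (N - n * Real.exp (-(μ * R t)) - R t)) t)
    (hRinit : R 0 = 0)
    (hRpos : ∀ t ∈ Set.Icc (0 : ℝ) T, 0 ≤ R t)
    (Rs : ℕ → ℝ → ℝ)
    (hRs0 : ∀ t, Rs 0 t = 0)
    (hinit : ∀ k, Rs k 0 = 0)
    (hode : ∀ k, ∀ t ∈ Set.Icc (0 : ℝ) T,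
      HasDerivAt (Rs (k + 1)) (γ * N - g (Rs k t) + M * Rs k t - M * Rs (k + 1) t) t)
    (hpos : ∀ k, ∀ t ∈ Set.Icc (0 : ℝ) T, 0 ≤ Rs k t) :
    (0 ≤ c ∧ c < 1) ∧
    ∀ k : ℕ, 1 ≤ k → ∀ t ∈ Set.Icc (0 : ℝ) T,
      |Rs k t - R t| ≤ c ^ k * sSup ((fun s => |R s|) '' Set.Icc (0 : ℝ) T) := by
  have hμ0 : 0 ≤ μ := hμ ▸ (div_pos hβ hγ).le
  have hMpos : 0 < M := hγ.trans_le hM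
  set u := γ - γ * n * μ with hu_def
  have hu : 0 < u := by nlinarith
  have huM : u ≤ M := by nlinarith [mul_nonneg (mul_nonneg hγ.le (by linarith : 0 ≤ n)) hμ0]
  have hc' : c = √((M - u) / (M + u)) := by rw [hc, hu_def]; congr 1; ring
  set F : ℝ → ℝ := fun r => γ * N - g r + M * r
  have hF : ∀ x y, 0 ≤ x → 0 ≤ y → |F x - F y| ≤ (M - u) * |x - y| := fun x y hx hy => by
    rw [show F x - F y = (M * x - g x) - (M * y - g y) by ring, hg, hg,
      show M - u = M - γ + γ * n * μ by ring]
    exact abs_relaxation_map_sub_le hγ.le (by linarith) hμ0 hM hx hy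
  set B := sSup ((fun s => |R s|) '' Set.Icc (0 : ℝ) T)
  have hRcont : ContinuousOn R (Set.Icc 0 T) := fun s hs =>
    (hRode s hs).continuousAt.continuousWithinAt
  have hB : ∀ t ∈ Set.Icc (0 : ℝ) T, |R t| ≤ B := fun t ht =>
    le_csSup (isCompact_Icc.bddAbove_image hRcont.abs) ⟨t, ht, rfl⟩
  have herror : ∀ k, ∀ t ∈ Set.Icc (0 : ℝ) T, |Rs k t - R t| ≤ ((M - u) / M) ^ k * B := by
    intro k
    induction k with
    | zero => simpa [hRs0] using hB
    | succ k ih =>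
      simpa only [pow_succ, mul_comm _ ((M - u) / M), mul_assoc] using
        abs_sub_le_of_hasDerivAt_relaxation hMpos (by linarith) hF
          ((hinit _).trans hRinit.symm) (hode k)
          (fun t ht => (hRode t ht).congr_deriv (by simp only [F, hg]; ring)) (hpos k) hRpos ih
  refine ⟨⟨hc' ▸ sqrt_nonneg _, hc' ▸ sqrt_sub_div_add_lt_one hu hMpos⟩, fun k _ t ht => ?_⟩
  refine (herror k t ht).trans (mul_le_mul_of_nonneg_right ?_ ((abs_nonneg _).trans (hB t ht)))
  exact pow_le_pow_left₀ (div_nonneg (by linarith) hMpos.le)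
    (hc' ▸ sub_div_self_le_sqrt_sub_div_add hu (by linarith)) k

/-- Geometric convergence of the relaxation scheme when `nμ < 1`: with
`c = √((M + γnμ − γ)/(M − γnμ + γ)) ∈ [0,1)`, one has for every `k ≥ 1`
`max_{[0,T]} |R_k − R| ≤ c^k · max_{[0,T]} |R|`. -/
theorem relaxation_geometric_convergence
    (β γ n a N μ M T c : ℝ) (hβ : 0 < β) (hγ : 0 < γ) (hn : 1 < n) (ha : 1 ≤ a)
    (hN : N = n + a) (hμ : μ = β / γ) (hsmall : n * μ < 1) (hM : γ ≤ M) (hT : 0 < T)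
    (hc : c = Real.sqrt ((M + γ * n * μ - γ) / (M - γ * n * μ + γ)))
    (g : ℝ → ℝ) (hg : ∀ r, g r = γ * n * Real.exp (-(μ * r)) + γ * r)
    (R : ℝ → ℝ)
    (hRode : ∀ t ∈ Set.Icc (0 : ℝ) T,
      HasDerivAt R (γ * (N - n * Real.exp (-(μ * R t)) - R t)) t)
    (hRinit : R 0 = 0)
    (hRpos : ∀ t ∈ Set.Icc (0 : ℝ) T, 0 ≤ R t)
    (Rs : ℕ → ℝ → ℝ)
    (hRs0 : ∀ t, Rs 0 t = 0)
    (hinit : ∀ k, Rs k 0 = 0)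
    (hode : ∀ k, ∀ t ∈ Set.Icc (0 : ℝ) T,
      HasDerivAt (Rs (k + 1)) (γ * N - g (Rs k t) + M * Rs k t - M * Rs (k + 1) t) t)
    (hpos : ∀ k, ∀ t ∈ Set.Icc (0 : ℝ) T, 0 ≤ Rs k t) :
    (0 ≤ c ∧ c < 1) ∧
    ∀ k : ℕ, 1 ≤ k → ∀ t ∈ Set.Icc (0 : ℝ) T,
      |Rs k t - R t| ≤ c ^ k * sSup ((fun s => |R s|) '' Set.Icc (0 : ℝ) T) :=
  relaxation_geometric_convergence_general β γ n N μ M T c hβ hγ hn hμ hsmall hM hc g hg R hRode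
    hRinit hRpos Rs hRs0 hinit hode hpos
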